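/- arXiv:1611.08574 — 2 statements merged into one kernel-verified Lean document; each statement's English description precedes it below -/
import Mathlib

section
/- Thresholding stream invariant (rejected elements have small marginal gain): Let f : Finset V → ℝ be submodular, let τ ∈ ℝ and N ∈ ℕ, and let L be a list of elements of V. If the output S = T_f(L, τ, N) satisfies |S| < N, then every element e occurring in L with e ∉ S satisfies Δ(e|S) < τ. -/
open scoped Classical

/-- The marginal gain `Δ(e|S) = f(S ∪ {e}) − f(S)`. -/
def marginal {V : Type*} [DecidableEq V] (f : Finset V → ℝ) (e : V) (S : Finset V) : ℝ :=
  f (insert e S) - f S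

/-- `f` is submodular: `Δ(e|B) ≤ Δ(e|A)` whenever `A ⊆ B` and `e ∉ B`. -/
def IsSubmodularFn {V : Type*} [DecidableEq V] (f : Finset V → ℝ) : Prop :=
  ∀ A B : Finset V, A ⊆ B → ∀ e : V, e ∉ B → marginal f e B ≤ marginal f e A

/-- The thresholding stream output `T_f(L, τ, N)`: fold over the list `L` starting from `∅`;
when processing `e` with current set `S`, add `e` if `Δ(e|S) ≥ τ` and `|S| < N`. -/
noncomputable def tstream {V : Type*} [DecidableEq V]
    (f : Finset V → ℝ) (τ : ℝ) (N : ℕ) (L : List V) : Finset V :=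
  L.foldl (fun S e => if marginal f e S ≥ τ ∧ S.card < N then insert e S else S) ∅

theorem List.le_foldl_of_le_step {α β : Type*} [Preorder α] {g : α → β → α}
    (hg : ∀ a b, a ≤ g a b) (l : List β) (a : α) : a ≤ l.foldl g a := by
  induction l generalizing a with
  | nil => exact le_rfl
  | cons b l ih => exact (hg a b).trans (ih _)

section ThresholdStep

variable {V : Type*} [DecidableEq V] (f : Finset V → ℝ) (τ : ℝ) (N : ℕ)

noncomputable def tstreamStep (S : Finset V) (e : V) : Finset V :=
  if marginal f e S ≥ τ ∧ S.card < N then insert e S else S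

theorem tstream_eq_foldl (L : List V) : tstream f τ N L = L.foldl (tstreamStep f τ N) ∅ := rfl

theorem subset_tstreamStep (S : Finset V) (e : V) : S ⊆ tstreamStep f τ N S e := by
  unfold tstreamStep
  split_ifs
  exacts [Finset.subset_insert e S, subset_rfl]

variable {f τ N}

/-- Since `S ⊆ T` and `T` is below capacity, `e` can only have been rejected at `S` for its
gain; submodularity carries that bound from `S` to `T`. -/
theorem marginal_lt_of_tstreamStep_subset (hsub : IsSubmodularFn f) {S T : Finset V} {e : V}
    (hST : tstreamStep f τ N S e ⊆ T) (he : e ∉ T) (hT : T.card < N) :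
    marginal f e T < τ := by
  have hrejected : ¬(marginal f e S ≥ τ ∧ S.card < N) := fun h ↦
    he (hST (by simp only [tstreamStep, if_pos h, Finset.mem_insert_self]))
  have hS : S ⊆ T := (subset_tstreamStep f τ N S e).trans hST
  have hgain : marginal f e S < τ := by
    by_contra! hge
    exact hrejected ⟨hge, (Finset.card_le_card hS).trans_lt hT⟩
  exact (hsub S T hS e he).trans_lt hgain

end ThresholdStep

theorem tstream_rejected_small_marginal_general
    {V : Type*} [DecidableEq V] (f : Finset V → ℝ)
    (hsub : IsSubmodularFn f) (τ : ℝ) (N : ℕ) (L : List V)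
    (hcard : (tstream f τ N L).card < N) :
    ∀ e ∈ L, e ∉ tstream f τ N L → marginal f e (tstream f τ N L) < τ := by
  intro e he hnot
  obtain ⟨L₁, L₂, rfl⟩ := List.append_of_mem he
  refine marginal_lt_of_tstreamStep_subset (S := L₁.foldl (tstreamStep f τ N) ∅)
    hsub ?_ hnot hcard
  rw [tstream_eq_foldl, List.foldl_append, List.foldl_cons]
  exact List.le_foldl_of_le_step (subset_tstreamStep f τ N) _ _

/-- Thresholding stream invariant: if `f` is submodular and the output
`S = T_f(L, τ, N)` satisfies `|S| < N`, then every element `e` of the stream `L`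
with `e ∉ S` has marginal gain `Δ(e|S) < τ`. -/
theorem tstream_rejected_small_marginal
    {V : Type*} [Fintype V] [DecidableEq V] (f : Finset V → ℝ)
    (hsub : IsSubmodularFn f) (τ : ℝ) (N : ℕ) (L : List V)
    (hcard : (tstream f τ N L).card < N) :
    ∀ e ∈ L, e ∉ tstream f τ N L → marginal f e (tstream f τ N L) < τ :=
  tstream_rejected_small_marginal_general f hsub τ N L hcard
end

section
/- Claim 1, part 2 of the paper: If b(v_π) = false, then every subfamily F' ⊆ F(π, b) whose union is all of X has cardinality at least ℓ. Equivalently, any family of fewer than ℓ sets from F(π, b) fails to cover X. -/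
/-- The cylinder of a word `w` over `Fin t` in the universe
`X = (Fin (k−1) → Fin t) × Fin l`: the pairs `(x, i)` such that the leaf `x` agrees
with `w` on the first `length w` coordinates. -/
def cylX (k t l : ℕ) (w : List (Fin t)) : Set ((Fin (k - 1) → Fin t) × Fin l) :=
  {p | ∀ i : Fin (k - 1), ∀ h : (i : ℕ) < w.length, p.1 i = w.get ⟨i, h⟩}

/-- The `π`-path words: `w_0 = []` and `w_{i+1} = w_i ++ [π(w_i)]`. -/
def pathWord {t : ℕ} (π : List (Fin t) → Fin t) : ℕ → List (Fin t)
  | 0 => []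
  | i + 1 => pathWord π i ++ [π (pathWord π i)]

/-- The leaf `v_π` determined by the `π`-path: `v_π(i) = π(w_i)`. -/
def pathLeaf (k t : ℕ) (π : List (Fin t) → Fin t) : Fin (k - 1) → Fin t :=
  fun i => π (pathWord π (i : ℕ))

/-- The set family `F(π, b)`: (i) the root set `X \ C([π([])])`; (ii) the sets
`C(w) \ C(w ++ [π(w)])` for words `w` with `1 ≤ |w| ≤ k−2`; (iii) the leaf cylinders `C(x)`
for leaves `x` with `b(x) = true`; (iv) the singletons `{e}` for `e ∈ C([π([])])`. -/
def coverFamily (k t l : ℕ) (π : List (Fin t) → Fin t)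
    (b : (Fin (k - 1) → Fin t) → Bool) : Set (Set ((Fin (k - 1) → Fin t) × Fin l)) :=
  {S | S = Set.univ \ cylX k t l [π []]} ∪
  {S | ∃ w : List (Fin t), 1 ≤ w.length ∧ w.length ≤ k - 2 ∧
        S = cylX k t l w \ cylX k t l (w ++ [π w])} ∪
  {S | ∃ x : Fin (k - 1) → Fin t, b x = true ∧ S = cylX k t l (List.ofFn x)} ∪
  {S | ∃ e ∈ cylX k t l [π []], S = {e}}

lemma pathWord_length {t : ℕ} (π : List (Fin t) → Fin t) :
    ∀ n, (pathWord π n).length = n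
  | 0 => rfl
  | n + 1 => by simp [pathWord, pathWord_length π n]

lemma pathWord_getElem {t : ℕ} (π : List (Fin t) → Fin t) :
    ∀ n i (h : i < (pathWord π n).length), (pathWord π n)[i] = π (pathWord π i)
  | 0, i, h => by simp [pathWord] at h
  | n + 1, i, h => by
    have hlen : (pathWord π n).length = n := pathWord_length π n
    show (pathWord π n ++ [π (pathWord π n)])[i] = _
    rcases lt_or_ge i n with hi | hi
    · refine (List.getElem_append_left (show i < (pathWord π n).length by omega)).trans ?_
      exact pathWord_getElem π n i (by omega)
    · have hlen' : (pathWord π (n + 1)).length = n + 1 := pathWord_length π (n + 1)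
      have hin : i = n := by omega
      subst hin
      exact List.getElem_concat_length hlen.symm _

lemma eq_pathWord {t : ℕ} (π : List (Fin t) → Fin t) (w : List (Fin t))
    (hw : ∀ i (h : i < w.length), w[i] = π (pathWord π i)) :
    w = pathWord π w.length := by
  induction w using List.reverseRecOn with
  | nil => rfl
  | append_singleton u a ih =>
    have hu : u = pathWord π u.length := by
      apply ih
      intro i h
      have := hw i (by simp; omega)
      rwa [List.getElem_append_left h] at this
    have ha : a = π (pathWord π u.length) := by
      have := hw u.length (by simp)
      simpa using this
    rw [List.length_append, List.length_singleton, pathWord, ← hu, ha, ← hu]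

/-- Claim 1, part 2 of the paper: if `b(v_π) = false`, then every (finite) subfamily of
`F(π, b)` whose union is all of `X` has cardinality at least `l`. -/
theorem cover_large_of_bit_false
    (k t l : ℕ) (hk : 2 ≤ k) (ht : 1 ≤ t) (hl : 1 ≤ l)
    (π : List (Fin t) → Fin t) (b : (Fin (k - 1) → Fin t) → Bool)
    (hb : b (pathLeaf k t π) = false) :
    ∀ F' : Set (Set ((Fin (k - 1) → Fin t) × Fin l)),
      F' ⊆ coverFamily k t l π b → ⋃₀ F' = Set.univ → F'.Finite → l ≤ F'.ncard := by
  intro F' hsub hcov hfin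
  set v : Fin (k - 1) → Fin t := pathLeaf k t π with hv
  have hk1 : 1 ≤ k - 1 := by omega
  -- (v, j) belongs to the root cylinder
  have hroot : ∀ j : Fin l, (v, j) ∈ cylX k t l [π []] := by
    intro j i h
    simp only [List.length_singleton] at h
    have h0 : (i : ℕ) = 0 := by omega
    show v i = _
    have h1 : v i = π (pathWord π (i : ℕ)) := rfl
    have h2 : [π []].get ⟨(i : ℕ), h⟩ = π [] := by simp
    rw [h1, h2, h0]
    rfl
  -- the only members of the family containing (v, j) are singletons {(v, j)}
  have hsing : ∀ j : Fin l, ({((v, j))} : Set _) ∈ F' := by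
    intro j
    have hmem : (v, j) ∈ ⋃₀ F' := by rw [hcov]; trivial
    obtain ⟨S, hSF, hvS⟩ := hmem
    have hSfam := hsub hSF
    rcases hSfam with ((hS | hS) | hS) | hS
    · -- root set: contradiction
      exfalso
      rw [hS] at hvS
      exact hvS.2 (hroot j)
    · -- middle sets: contradiction
      exfalso
      obtain ⟨w, hw1, hw2, rfl⟩ := hS
      obtain ⟨hin, hout⟩ := hvS
      have hwp : w = pathWord π w.length := by
        apply eq_pathWord
        intro i hi
        have hik : i < k - 1 := by omega
        have := hin ⟨i, hik⟩ (by simpa using hi)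
        simp only [List.get_eq_getElem] at this
        rw [← this]
        rfl
      apply hout
      intro i hi
      simp only [List.length_append, List.length_singleton] at hi
      rcases lt_or_ge (i : ℕ) w.length with h' | h'
      · simp only [List.get_eq_getElem, List.getElem_append_left h']
        have := hin i h'
        simpa using this
      · have hiw : (i : ℕ) = w.length := by omega
        simp only [List.get_eq_getElem]
        rw [List.getElem_concat_length (by omega)]
        show v i = π w
        have hvi : v i = π (pathWord π (i : ℕ)) := rfl
        rw [hvi, hiw, ← hwp]
    · -- leaf cylinders: contradiction with b v = false
      exfalso
      obtain ⟨x, hbx, rfl⟩ := hS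
      have hxv : x = v := by
        funext i
        have := hvS i (by simp [i.isLt])
        simp only [List.get_eq_getElem, List.getElem_ofFn] at this
        rw [this]
      rw [hxv] at hbx
      rw [hv] at hbx
      rw [hb] at hbx
      exact Bool.false_ne_true hbx
    · -- singleton
      obtain ⟨e, _, rfl⟩ := hS
      rcases hvS with rfl
      exact hSF
  -- count the l distinct singletons
  classical
  let f : Fin l → Set ((Fin (k - 1) → Fin t) × Fin l) := fun j => {(v, j)}
  have hfinj : Function.Injective f := by
    intro j j' hjj'
    have h2 : ((v, j) : (Fin (k - 1) → Fin t) × Fin l) = (v, j') :=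
      Set.singleton_eq_singleton_iff.mp hjj'
    exact (Prod.ext_iff.mp h2).2
  have hcard : l ≤ hfin.toFinset.card := by
    have := Finset.card_le_card_of_injOn (s := Finset.univ) f
      (fun j _ => hfin.mem_toFinset.mpr (hsing j)) (hfinj.injOn)
    simpa using this
  rwa [← hfin.coe_toFinset, Set.ncard_coe_finset]
end
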